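/- Let α ∈ (0,1) and define, on D₁⁺ = {x ∈ (0,1)×(-1,1) : |x₂| < x₁^(1+α)}, the vector field V(x) = (-(1+α)x₁^α, 1)/sqrt(1+(1+α)² x₁^(2α)). Then V is differentiable on D₁⁺ with ∂₂V(x) = 0 and |DV(x)| ≤ c(α)·x₁^(α-1) for a constant c(α) depending only on α; consequently ∫_{D₁⁺} |DV| dx < ∞. -/

import Mathlib

open MeasureTheory Set

/-- The domain `D₁⁺ = {x ∈ (0,1)×(-1,1) : |x₂| < x₁^(1+α)}`. -/
def DOnePlus (α : ℝ) : Set (ℝ × ℝ) :=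
  {x : ℝ × ℝ | 0 < x.1 ∧ x.1 < 1 ∧ |x.2| < x.1 ^ (1 + α)}

/-- The vector field `V(x) = (-(1+α)x₁^α, 1)/√(1+(1+α)²x₁^(2α))`. -/
noncomputable def Vfield (α : ℝ) (x : ℝ × ℝ) : ℝ × ℝ :=
  ((-(1 + α) * x.1 ^ α) / Real.sqrt (1 + (1 + α) ^ 2 * x.1 ^ (2 * α)),
    1 / Real.sqrt (1 + (1 + α) ^ 2 * x.1 ^ (2 * α)))

/-! `Vfield α x = n((1 + α) x₁^α)`, where `n(s) = (-s, 1)/√(1 + s²)` is the upward unit normal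
to a line of slope `s`: `V` is the unit normal to the graph `x₂ = x₁^(1+α)`, translated
vertically, so it depends on `x₁` alone. Since `n'(s) = -(1, s)/(1 + s²)^(3/2)` has norm at most
`1`, the chain rule gives `|DV(x)| ≤ (1 + α) α x₁^(α-1)`,
which is integrable over `(0,1) × (-1,1)` because `α - 1 > -1`. -/

noncomputable def unitNormalOfSlope (s : ℝ) : ℝ × ℝ :=
  (√(1 + s ^ 2))⁻¹ • (-s, 1)

theorem hasDerivAt_unitNormalOfSlope (s : ℝ) :
    HasDerivAt unitNormalOfSlope (-(√(1 + s ^ 2) ^ 3)⁻¹ • (1, s)) s := by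
  have hpos : 0 < 1 + s ^ 2 := by positivity
  have hroot : HasDerivAt (fun s : ℝ => √(1 + s ^ 2)) (2 * s / (2 * √(1 + s ^ 2))) s := by
    simpa using ((hasDerivAt_id s).pow 2).const_add 1 |>.sqrt hpos.ne'
  have hvec : HasDerivAt (fun s : ℝ => ((-s, 1) : ℝ × ℝ)) (-1, 0) s :=
    (hasDerivAt_id s).neg.prodMk (hasDerivAt_const s 1)
  have h : HasDerivAt unitNormalOfSlope _ s :=
    (hroot.inv (Real.sqrt_pos.mpr hpos).ne').smul hvec
  refine h.congr_deriv ?_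
  have hsq : √(1 + s ^ 2) ^ 2 = 1 + s ^ 2 := Real.sq_sqrt hpos.le
  ext <;> simp <;> field_simp
  linear_combination -hsq

theorem norm_deriv_unitNormalOfSlope_le_one (s : ℝ) :
    ‖-(√(1 + s ^ 2) ^ 3)⁻¹ • ((1, s) : ℝ × ℝ)‖ ≤ 1 := by
  set r := √(1 + s ^ 2)
  have hr : 1 ≤ r := Real.one_le_sqrt.mpr (by nlinarith)
  have hvec : ‖((1, s) : ℝ × ℝ)‖ ≤ r :=
    max_le (by simpa using hr) (Real.abs_le_sqrt (by linarith))
  rw [norm_smul, norm_neg, norm_inv, norm_pow, Real.norm_of_nonneg (by positivity)]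
  calc (r ^ 3)⁻¹ * ‖((1, s) : ℝ × ℝ)‖ ≤ (r ^ 3)⁻¹ * r := by gcongr
    _ = (r ^ 2)⁻¹ := by field_simp
    _ ≤ 1 := inv_le_one_of_one_le₀ (one_le_pow₀ hr)

theorem HasDerivAt.hasFDerivAt_comp_fst {𝕜 E F : Type*} [NontriviallyNormedField 𝕜]
    [NormedAddCommGroup E] [NormedSpace 𝕜 E] [NormedAddCommGroup F] [NormedSpace 𝕜 F]
    {f : 𝕜 → E} {v : E} {x : 𝕜 × F} (hf : HasDerivAt f v x.1) :
    HasFDerivAt (fun p : 𝕜 × F => f p.1) ((ContinuousLinearMap.fst 𝕜 𝕜 F).smulRight v) x := by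
  refine (hf.hasFDerivAt.comp x hasFDerivAt_fst).congr_fderiv ?_
  ext <;> simp

theorem Vfield_eq_unitNormalOfSlope (α : ℝ) {x : ℝ × ℝ} (hx : 0 ≤ x.1) :
    Vfield α x = unitNormalOfSlope ((1 + α) * x.1 ^ α) := by
  have hsq : (1 + α) ^ 2 * x.1 ^ (2 * α) = ((1 + α) * x.1 ^ α) ^ 2 := by
    rw [mul_pow, ← Real.rpow_natCast (x.1 ^ α), ← Real.rpow_mul hx, mul_comm α]
    norm_num
  rw [Vfield, unitNormalOfSlope, hsq]
  ext <;> simp only [smul_eq_mul, Prod.smul_mk] <;> ring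

theorem exists_hasFDerivAt_Vfield (α : ℝ) {x : ℝ × ℝ} (hx : 0 < x.1) :
    ∃ v : ℝ × ℝ, HasFDerivAt (Vfield α) ((ContinuousLinearMap.fst ℝ ℝ ℝ).smulRight v) x ∧
      ‖v‖ ≤ |(1 + α) * α| * x.1 ^ (α - 1) := by
  have hslope : HasDerivAt (fun t => (1 + α) * t ^ α) ((1 + α) * (α * x.1 ^ (α - 1))) x.1 :=
    (Real.hasDerivAt_rpow_const (Or.inl hx.ne')).const_mul _
  have hprofile := (hasDerivAt_unitNormalOfSlope _).scomp x.1 hslope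
  have heq : Vfield α =ᶠ[nhds x] fun p => (unitNormalOfSlope ∘ fun t => (1 + α) * t ^ α) p.1 :=
    ((continuous_fst.tendsto x).eventually (lt_mem_nhds hx)).mono
      fun p hp => Vfield_eq_unitNormalOfSlope α hp.le
  refine ⟨_, hprofile.hasFDerivAt_comp_fst.congr_of_eventuallyEq heq, ?_⟩
  rw [norm_smul, Real.norm_eq_abs, abs_mul, abs_mul, abs_of_pos (Real.rpow_pos_of_pos hx _)]
  calc |1 + α| * (|α| * x.1 ^ (α - 1)) * ‖_‖ ≤ |1 + α| * (|α| * x.1 ^ (α - 1)) * 1 := by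
        gcongr; exact norm_deriv_unitNormalOfSlope_le_one _
    _ = |(1 + α) * α| * x.1 ^ (α - 1) := by rw [abs_mul]; ring

theorem measurableSet_DOnePlus (α : ℝ) : MeasurableSet (DOnePlus α) :=
  (measurableSet_lt measurable_const measurable_fst).inter
    ((measurableSet_lt measurable_fst measurable_const).inter
      (measurableSet_lt measurable_snd.abs (measurable_fst.pow_const _)))

theorem DOnePlus_subset {α : ℝ} (hα : 0 ≤ α) : DOnePlus α ⊆ Ioo 0 1 ×ˢ Ioo (-1) 1 := by
  rintro x ⟨hx0, hx1, hx2⟩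
  have hpow : x.1 ^ (1 + α) ≤ 1 := Real.rpow_le_one hx0.le hx1.le (by linarith)
  exact ⟨⟨hx0, hx1⟩, abs_lt.mp (hx2.trans_le hpow)⟩

theorem integrableOn_rpow_fst {s : ℝ} (hs : -1 < s) (a b : ℝ) :
    IntegrableOn (fun x : ℝ × ℝ => x.1 ^ s) (Ioo 0 1 ×ˢ Ioo a b) := by
  rw [IntegrableOn, Measure.volume_eq_prod, ← Measure.prod_restrict]
  exact ((intervalIntegral.integrableOn_Ioo_rpow_iff zero_lt_one).mpr hs).comp_fst _

theorem integrableOn_DOnePlus_of_norm_le {E : Type*} [NormedAddCommGroup E] {α c : ℝ}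
    (hα : 0 < α) {f : ℝ × ℝ → E} (hf : AEStronglyMeasurable f)
    (hle : ∀ x ∈ DOnePlus α, ‖f x‖ ≤ c * x.1 ^ (α - 1)) : IntegrableOn f (DOnePlus α) := by
  have hbound : IntegrableOn (fun x : ℝ × ℝ => c * x.1 ^ (α - 1)) (DOnePlus α) :=
    IntegrableOn.mono_set ((integrableOn_rpow_fst (by linarith) (-1) 1).const_mul c)
      (DOnePlus_subset hα.le)
  exact hbound.mono' hf.restrict (ae_restrict_of_forall_mem (measurableSet_DOnePlus α) hle)

/-- `V` is differentiable on `D₁⁺`, the derivative kills the second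
direction, `|DV(x)| ≤ c(α) x₁^(α-1)`, and consequently `∫_{D₁⁺} |DV| < ∞`. -/
theorem stmt15 (α : ℝ) (hα : α ∈ Set.Ioo (0 : ℝ) 1) :
    ∃ c : ℝ, 0 < c ∧
      (∀ x ∈ DOnePlus α,
        DifferentiableAt ℝ (Vfield α) x ∧
        fderiv ℝ (Vfield α) x (0, 1) = 0 ∧
        ‖fderiv ℝ (Vfield α) x‖ ≤ c * x.1 ^ (α - 1)) ∧
      IntegrableOn (fun x => ‖fderiv ℝ (Vfield α) x‖) (DOnePlus α) := by
  obtain ⟨hα0, -⟩ := hα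
  have hV : ∀ x ∈ DOnePlus α, DifferentiableAt ℝ (Vfield α) x ∧
      fderiv ℝ (Vfield α) x (0, 1) = 0 ∧
      ‖fderiv ℝ (Vfield α) x‖ ≤ |(1 + α) * α| * x.1 ^ (α - 1) := by
    rintro x ⟨hx, -, -⟩
    obtain ⟨v, hDV, hv⟩ := exists_hasFDerivAt_Vfield α hx
    refine ⟨hDV.differentiableAt, by simp [hDV.fderiv], ?_⟩
    rw [hDV.fderiv, ContinuousLinearMap.norm_smulRight_apply]
    exact (mul_le_of_le_one_left (norm_nonneg v) (ContinuousLinearMap.norm_fst_le ℝ ℝ ℝ)).trans hv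
  refine ⟨|(1 + α) * α|, abs_pos.mpr (by positivity), hV, ?_⟩
  exact integrableOn_DOnePlus_of_norm_le hα0
    (measurable_fderiv ℝ (Vfield α)).norm.aestronglyMeasurable
    fun x hx => by simpa using (hV x hx).2.2
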